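/- There is a constant c > 0 such that for every ω ≥ 1 and every Schwartz function f on ℝ³ = ℝ² × ℝ (variables (x,z)), one has Ẽ_ω(f) ≥ c ( ‖f‖²_{L²(ℝ³)} + ‖∇f‖²_{L²(ℝ³)} ), where ∇ is the full gradient on ℝ³. -/

import Mathlib

open MeasureTheory Complex

noncomputable section

/-- ℝ² with the Euclidean norm. -/
abbrev R2 : Type := EuclideanSpace ℝ (Fin 2)

/-- ℝ³ written as ℝ² × ℝ, points r = (x, z). -/
abbrev R3 : Type := R2 × ℝ

/-- Directional derivative of `f` at `p` in the direction `v`. -/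
def pd {E F : Type*} [NormedAddCommGroup E] [NormedSpace ℝ E]
    [NormedAddCommGroup F] [NormedSpace ℝ F] (v : E) (f : E → F) (p : E) : F :=
  fderiv ℝ f p v

/-- Second directional derivative in the direction `v`. -/
def pd2 {E F : Type*} [NormedAddCommGroup E] [NormedSpace ℝ E]
    [NormedAddCommGroup F] [NormedSpace ℝ F] (v : E) (f : E → F) (p : E) : F :=
  pd v (pd v f) p

/-- First coordinate direction in the x-plane. -/
def ex0 : R3 := (EuclideanSpace.single 0 1, 0)

/-- Second coordinate direction in the x-plane. -/
def ex1 : R3 := (EuclideanSpace.single 1 1, 0)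

/-- The z-direction. -/
def ez : R3 := (0, 1)

/-- The full Laplacian on ℝ³ = ℝ² × ℝ. -/
def lap3 {F : Type*} [NormedAddCommGroup F] [NormedSpace ℝ F]
    (f : R3 → F) (p : R3) : F :=
  pd2 ex0 f p + pd2 ex1 f p + pd2 ez f p

/-- The operator `S² f = (1−ω)f − Δf + ω² z² f` on functions on ℝ³. -/
def S2op (ω : ℝ) (f : R3 → ℂ) (p : R3) : ℂ :=
  ((1 - ω : ℝ) : ℂ) * f p - lap3 f p + ((ω ^ 2 * p.2 ^ 2 : ℝ) : ℂ) * f p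
/-- The quadratic form
`Ẽ_ω(f) = ‖f‖² + ‖∇ₓf‖² + ω(‖∂_z f‖² + ‖z f‖² − ‖f‖²)` on L²(ℝ³). -/
def Etform (ω : ℝ) (f : R3 → ℂ) : ℝ :=
  (∫ p : R3, ‖f p‖ ^ 2) +
    ((∫ p : R3, ‖pd ex0 f p‖ ^ 2) + (∫ p : R3, ‖pd ex1 f p‖ ^ 2)) +
    ω * ((∫ p : R3, ‖pd ez f p‖ ^ 2) + (∫ p : R3, p.2 ^ 2 * ‖f p‖ ^ 2) -
      (∫ p : R3, ‖f p‖ ^ 2))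

/-!
Since `ω ≥ 1`, it suffices that the bracket `‖∂_z f‖² + ‖z f‖² − ‖f‖²` is nonnegative: then
`Ẽ_ω(f) ≥ ‖∇ₓ f‖² + ‖∂_z f‖² + ‖z f‖²`, which dominates half of `‖f‖² + ‖∇f‖²`. Nonnegativity
of the bracket is the ground-state bound for the harmonic oscillator: integrating by parts,
`2 ∫ z ⟪f, ∂_z f⟫ = −‖f‖²`, and `0 ≤ ‖∂_z f + z f‖²` pointwise.
-/

open scoped LineDeriv RealInnerProductSpace

namespace SchwartzMap

variable {D E H : Type*} [NormedAddCommGroup D] [NormedSpace ℝ D]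
  [NormedAddCommGroup E] [NormedSpace ℝ E] [NormedAddCommGroup H] [InnerProductSpace ℝ H]

theorem lineDerivOp_smulLeftCLM (ℓ : D →L[ℝ] ℝ) (F : 𝓢(D, E)) (v x : D) :
    ∂_{v} (smulLeftCLM E ⇑ℓ F) x = ℓ v • F x + ℓ x • ∂_{v} F x := by
  have hF : HasFDerivAt (fun y => ℓ y • F y) (ℓ x • fderiv ℝ F x + ℓ.smulRight (F x)) x :=
    ℓ.hasFDerivAt.smul (F.hasFDerivAt x)
  rw [lineDerivOp_apply_eq_fderiv, smulLeftCLM_apply ℓ.hasTemperateGrowth, hF.fderiv]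
  simp [lineDerivOp_apply_eq_fderiv, add_comm]

variable [FiniteDimensional ℝ D] [MeasurableSpace D] [BorelSpace D]
  {μ : Measure D} [μ.IsAddHaarMeasure]

theorem integrable_norm_sq (F : 𝓢(D, E)) : Integrable (fun x => ‖F x‖ ^ 2) μ := by
  simpa using (F.memLp 2 μ).integrable_norm_pow two_ne_zero

theorem integrable_clm_sq_mul_norm_sq (ℓ : D →L[ℝ] ℝ) (F : 𝓢(D, E)) :
    Integrable (fun x => ℓ x ^ 2 * ‖F x‖ ^ 2) μ := by
  simpa only [smulLeftCLM_apply_apply ℓ.hasTemperateGrowth, norm_smul, mul_pow,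
    Real.norm_eq_abs, sq_abs] using integrable_norm_sq (μ := μ) (smulLeftCLM E ⇑ℓ F)

theorem integrable_inner (F G : 𝓢(D, H)) : Integrable (fun x => ⟪F x, G x⟫) μ :=
  (pairing (innerSL ℝ) F G).integrable

theorem integrable_clm_mul_inner (ℓ : D →L[ℝ] ℝ) (F G : 𝓢(D, H)) :
    Integrable (fun x => ℓ x * ⟪F x, G x⟫) μ := by
  simpa only [smulLeftCLM_apply_apply ℓ.hasTemperateGrowth, real_inner_smul_left] using
    integrable_inner (μ := μ) (smulLeftCLM H ⇑ℓ F) G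

theorem two_mul_integral_clm_mul_inner_lineDerivOp (ℓ : D →L[ℝ] ℝ) (F : 𝓢(D, H)) {v : D}
    (hv : ℓ v = 1) :
    2 * ∫ x, ℓ x * ⟪F x, ∂_{v} F x⟫ ∂μ = -∫ x, ‖F x‖ ^ 2 ∂μ := by
  set G := smulLeftCLM H ⇑ℓ F
  have hG : ∀ x, G x = ℓ x • F x := smulLeftCLM_apply_apply ℓ.hasTemperateGrowth F
  have hparts := integral_bilinear_lineDerivOp_right_eq_neg_left (μ := μ) G F (innerSL ℝ) v
  have hleft : ∀ x, innerSL ℝ (G x) (∂_{v} F x) = ℓ x * ⟪F x, ∂_{v} F x⟫ := fun x => by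
    rw [innerSL_apply_apply, hG, real_inner_smul_left]
  have hright : ∀ x, innerSL ℝ (∂_{v} G x) (F x) = ‖F x‖ ^ 2 + ℓ x * ⟪F x, ∂_{v} F x⟫ :=
    fun x => by
      rw [innerSL_apply_apply, lineDerivOp_smulLeftCLM, hv, one_smul, inner_add_left,
        real_inner_self_eq_norm_sq, real_inner_smul_left, real_inner_comm]
  simp only [hleft, hright,
    integral_add (integrable_norm_sq F) (integrable_clm_mul_inner ℓ F (∂_{v} F))] at hparts
  linarith

theorem integral_norm_sq_le_lineDerivOp_add_clm_sq (ℓ : D →L[ℝ] ℝ) (F : 𝓢(D, H)) {v : D}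
    (hv : ℓ v = 1) :
    ∫ x, ‖F x‖ ^ 2 ∂μ ≤ ∫ x, ‖∂_{v} F x‖ ^ 2 ∂μ + ∫ x, ℓ x ^ 2 * ‖F x‖ ^ 2 ∂μ := by
  have hpointwise : ∀ x, -(2 * (ℓ x * ⟪F x, ∂_{v} F x⟫)) ≤
      ‖∂_{v} F x‖ ^ 2 + ℓ x ^ 2 * ‖F x‖ ^ 2 := fun x => by
    have := norm_add_sq_real (∂_{v} F x) (ℓ x • F x)
    rw [real_inner_smul_right, real_inner_comm, norm_smul, Real.norm_eq_abs, mul_pow,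
      sq_abs] at this
    nlinarith [sq_nonneg ‖∂_{v} F x + ℓ x • F x‖]
  have hint := integrable_clm_mul_inner (μ := μ) ℓ F (∂_{v} F)
  calc ∫ x, ‖F x‖ ^ 2 ∂μ = ∫ x, -(2 * (ℓ x * ⟪F x, ∂_{v} F x⟫)) ∂μ := by
        rw [integral_neg, integral_const_mul, two_mul_integral_clm_mul_inner_lineDerivOp ℓ F hv,
          neg_neg]
    _ ≤ ∫ x, (‖∂_{v} F x‖ ^ 2 + ℓ x ^ 2 * ‖F x‖ ^ 2) ∂μ :=
        integral_mono (hint.const_mul 2).neg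
          ((integrable_norm_sq _).add (integrable_clm_sq_mul_norm_sq ℓ F)) hpointwise
    _ = _ := integral_add (integrable_norm_sq _) (integrable_clm_sq_mul_norm_sq ℓ F)

end SchwartzMap

-- Instance search does not unfold `volume` on a product to `volume.prod volume`.
instance : (volume : Measure R3).IsAddHaarMeasure := by
  rw [Measure.volume_eq_prod]; infer_instance

/-- there is `c > 0` such that for every `ω ≥ 1` and every Schwartz
function `f` on ℝ³, `Ẽ_ω(f) ≥ c (‖f‖² + ‖∇f‖²)`. -/
theorem Etform_coercive :
    ∃ c : ℝ, 0 < c ∧ ∀ ω : ℝ, 1 ≤ ω → ∀ f : SchwartzMap R3 ℂ,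
      c * ((∫ p : R3, ‖f p‖ ^ 2) +
          ((∫ p : R3, ‖pd ex0 (⇑f) p‖ ^ 2) + (∫ p : R3, ‖pd ex1 (⇑f) p‖ ^ 2) +
            (∫ p : R3, ‖pd ez (⇑f) p‖ ^ 2))) ≤
        Etform ω (⇑f) := by
  refine ⟨1 / 2, one_half_pos, fun ω hω f => ?_⟩
  -- `pd v f` is the Schwartz line derivative `∂_{v} f` by definition.
  have hosc : (∫ p : R3, ‖f p‖ ^ 2) ≤
      (∫ p : R3, ‖pd ez (⇑f) p‖ ^ 2) + ∫ p : R3, p.2 ^ 2 * ‖f p‖ ^ 2 :=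
    SchwartzMap.integral_norm_sq_le_lineDerivOp_add_clm_sq (.snd ℝ R2 ℝ) f (v := ez) rfl
  have hx0 : 0 ≤ ∫ p : R3, ‖pd ex0 (⇑f) p‖ ^ 2 := integral_nonneg fun _ => by positivity
  have hx1 : 0 ≤ ∫ p : R3, ‖pd ex1 (⇑f) p‖ ^ 2 := integral_nonneg fun _ => by positivity
  have hzf : 0 ≤ ∫ p : R3, p.2 ^ 2 * ‖f p‖ ^ 2 := integral_nonneg fun _ => by positivity
  rw [Etform]
  nlinarith [mul_nonneg (sub_nonneg.2 hω) (sub_nonneg.2 hosc)]
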